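/- arXiv:math/0212154 — 7 statements merged into one kernel-verified Lean document; each statement's English description precedes it below -/
import Mathlib

section
/- Let p, p' be coprime integers with 1 ≤ p < p' and let r be an integer with 1 ≤ r < p. Setting h = ⌊rp'/p⌋, one has ⌊hp/p'⌋ = r - 1 and ⌊(h+1)p/p'⌋ = r; in particular the band between heights h and h+1 in the (p,p')-model is odd. -/
/-- For coprime `1 ≤ p < p'` and `1 ≤ r < p`, setting `h = ⌊rp'/p⌋`, one has
`⌊hp/p'⌋ = r - 1` and `⌊(h+1)p/p'⌋ = r`; in particular the band between heights
`h` and `h+1` in the `(p,p')`-model is odd. -/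
theorem rth_odd_band (p p' r : ℤ) (hp : 1 ≤ p) (hpp : p < p')
    (hcop : Int.gcd p p' = 1) (hr1 : 1 ≤ r) (hr2 : r < p) :
    Int.fdiv (Int.fdiv (r * p') p * p) p' = r - 1 ∧
    Int.fdiv ((Int.fdiv (r * p') p + 1) * p) p' = r := by
  have hp0 : (0:ℤ) < p := hp
  have hp'0 : (0:ℤ) < p' := lt_trans hp0 hpp
  rw [Int.fdiv_eq_ediv_of_nonneg _ hp0.le, Int.fdiv_eq_ediv_of_nonneg _ hp'0.le, Int.fdiv_eq_ediv_of_nonneg _ hp'0.le]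
  set s := r * p' % p with hs
  have hkey : p * (r * p' / p) + s = r * p' := Int.mul_ediv_add_emod (r * p') p
  have hs0 : 0 ≤ s := Int.emod_nonneg _ hp0.ne'
  have hsp : s < p := Int.emod_lt_of_pos _ hp0
  have hsne : s ≠ 0 := by
    intro h0
    have hdvd : p ∣ r * p' := Int.dvd_of_emod_eq_zero h0
    have hco : IsCoprime p p' := Int.isCoprime_iff_gcd_eq_one.mpr hcop
    have : p ∣ r := hco.dvd_of_dvd_mul_right hdvd
    have := Int.le_of_dvd (by linarith) this
    linarith
  have hs1 : 1 ≤ s := lt_of_le_of_ne hs0 (Ne.symm hsne)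
  constructor
  · have h1 : r * p' / p * p = (p' - s) + (r - 1) * p' := by linarith [hkey]
    rw [h1, Int.add_mul_ediv_right _ _ hp'0.ne',
      Int.ediv_eq_zero_of_lt (by linarith) (by linarith)]
    ring
  · have h1 : (r * p' / p + 1) * p = (p - s) + r * p' := by linarith [hkey]
    rw [h1, Int.add_mul_ediv_right _ _ hp'0.ne',
      Int.ediv_eq_zero_of_lt (by linarith) (by linarith)]
    ring
end

section
/- Let 1 ≤ p < p', let 1 ≤ a < p', let e ∈ {0,1}, and set a' = a + ⌊ap/p'⌋ + e. Then ⌊a'p/(p'+p)⌋ = ⌊ap/p'⌋ and moreover ⌊(a' + (-1)^e)p/(p'+p)⌋ = ⌊a'p/(p'+p)⌋. -/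
/-- Let `1 ≤ p < p'`, `1 ≤ a < p'`, `e ∈ {0,1}`, and `a' = a + ⌊ap/p'⌋ + e`. Then
`⌊a'p/(p'+p)⌋ = ⌊ap/p'⌋` and `⌊(a' + (-1)^e)p/(p'+p)⌋ = ⌊a'p/(p'+p)⌋`
(i.e. `δ^{p,p'+p}_{a',e} = 0`). -/
theorem startpoint_dilation (p p' a a' : ℤ) (e : ℕ) (hp : 1 ≤ p) (hpp : p < p')
    (ha : 1 ≤ a) (ha2 : a < p') (he : e ≤ 1)
    (hdef : a' = a + Int.fdiv (a * p) p' + (e : ℤ)) :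
    Int.fdiv (a' * p) (p' + p) = Int.fdiv (a * p) p' ∧
    Int.fdiv ((a' + (-1 : ℤ) ^ e) * p) (p' + p) = Int.fdiv (a' * p) (p' + p) := by
  have hp' : (0:ℤ) < p' := by linarith
  have hd : (0:ℤ) < p' + p := by linarith
  rw [Int.fdiv_eq_ediv_of_nonneg _ hp'.le] at hdef
  rw [Int.fdiv_eq_ediv_of_nonneg _ hp'.le, Int.fdiv_eq_ediv_of_nonneg _ hd.le, Int.fdiv_eq_ediv_of_nonneg _ hd.le]
  set q := a * p / p' with hqdef
  set r := a * p % p' with hrdef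
  have hq : p' * q + r = a * p := Int.mul_ediv_add_emod _ _
  have hr0 : 0 ≤ r := Int.emod_nonneg _ (ne_of_gt hp')
  have hr1 : r < p' := Int.emod_lt_of_pos _ hp'
  have key : ∀ c s : ℤ, 0 ≤ s → s < p' + p → (c * (p' + p) + s) / (p' + p) = c := by
    intro c s h1 h2
    rw [add_comm, Int.add_mul_ediv_right _ _ (ne_of_gt hd),
      Int.ediv_eq_zero_of_lt h1 h2, zero_add]
  interval_cases e
  · have h1 : a' * p = q * (p' + p) + r := by rw [hdef]; push_cast; linear_combination -hq
    have h2 : (a' + (-1:ℤ)^0) * p = q * (p' + p) + (r + p) := by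
      rw [hdef]; push_cast; linear_combination -hq
    rw [h1, h2, key q r hr0 (by linarith), key q (r + p) (by linarith) (by linarith)]
    exact ⟨rfl, rfl⟩
  · have h1 : a' * p = q * (p' + p) + (r + p) := by rw [hdef]; push_cast; linear_combination -hq
    have h2 : (a' + (-1:ℤ)^1) * p = q * (p' + p) + r := by
      rw [hdef]; push_cast; linear_combination -hq
    rw [h1, h2, key q r hr0 (by linarith), key q (r + p) (by linarith) (by linarith)]
    exact ⟨rfl, rfl⟩
end

section
/- Let 1 ≤ p < p', let 1 ≤ a < p' and e ∈ {0,1}, and set a' = a + ⌊ap/p'⌋ + e. If either (i) a is interfacial in the (p,p')-model and ⌊(a+(-1)^e)p/p'⌋ = ⌊ap/p'⌋, or (ii) a is multifacial in the (p,p')-model, then a' is interfacial in the (p, p'+p)-model, i.e. ⌊(a'+1)p/(p'+p)⌋ = ⌊(a'-1)p/(p'+p)⌋ + 1. -/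
lemma fdiv_eq_of_bounds (N d m : ℤ) (hd : 0 < d) (h1 : m * d ≤ N) (h2 : N < (m + 1) * d) :
    Int.fdiv N d = m := by
  rw [Int.fdiv_eq_ediv_of_nonneg _ hd.le]
  have hl : m ≤ N / d := Int.le_ediv_iff_mul_le hd |>.mpr h1
  have hu : N / d < m + 1 := Int.ediv_lt_iff_lt_mul hd |>.mpr h2
  omega

lemma fdiv_bounds (N d : ℤ) (hd : 0 < d) :
    Int.fdiv N d * d ≤ N ∧ N < (Int.fdiv N d + 1) * d := by
  rw [Int.fdiv_eq_ediv_of_nonneg _ hd.le]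
  constructor
  · exact Int.ediv_mul_le N hd.ne'
  · have := Int.lt_ediv_add_one_mul_self N hd
    linarith

/-- Let `1 ≤ p < p'`, `1 ≤ a < p'`, `e ∈ {0,1}`, and `a' = a + ⌊ap/p'⌋ + e`
(with `2 ≤ a' ≤ p'+p-2`). If either (i) `a` is interfacial in the `(p,p')`-model and
`⌊(a+(-1)^e)p/p'⌋ = ⌊ap/p'⌋`, or (ii) `a` is multifacial in the `(p,p')`-model,
then `a'` is interfacial in the `(p,p'+p)`-model. -/
theorem startpoint_interfacial (p p' a a' : ℤ) (e : ℕ) (hp : 1 ≤ p) (hpp : p < p')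
    (ha : 1 ≤ a) (ha2 : a < p') (he : e ≤ 1)
    (hdef : a' = a + Int.fdiv (a * p) p' + (e : ℤ))
    (ha'1 : 2 ≤ a') (ha'2 : a' ≤ p' + p - 2)
    (hcase :
      (Int.fdiv ((a + 1) * p) p' = Int.fdiv ((a - 1) * p) p' + 1 ∧
        Int.fdiv ((a + (-1 : ℤ) ^ e) * p) p' = Int.fdiv (a * p) p') ∨
      Int.fdiv ((a + 1) * p) p' = Int.fdiv ((a - 1) * p) p' + 2) :
    Int.fdiv ((a' + 1) * p) (p' + p) = Int.fdiv ((a' - 1) * p) (p' + p) + 1 := by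
  have hp' : (0:ℤ) < p' := by linarith
  have hD : (0:ℤ) < p' + p := by linarith
  obtain ⟨hf1, hf2⟩ := fdiv_bounds (a * p) p' hp'
  obtain ⟨hm1, hm2⟩ := fdiv_bounds ((a - 1) * p) p' hp'
  obtain ⟨hq1, hq2⟩ := fdiv_bounds ((a + 1) * p) p' hp'
  set f := Int.fdiv (a * p) p' with hf
  set gm := Int.fdiv ((a - 1) * p) p' with hgm
  set gp := Int.fdiv ((a + 1) * p) p' with hgp
  clear_value f gm gp
  -- step relations: gm ≤ f ≤ gp, gp ≤ f + 1, f ≤ gm + 1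
  have hstep1 : gm ≤ f := by nlinarith
  have hstep2 : f ≤ gp := by nlinarith
  have hstep3 : gp ≤ f + 1 := by nlinarith
  have hstep4 : f ≤ gm + 1 := by nlinarith
  interval_cases e
  · simp only [pow_zero, Nat.cast_zero, add_zero] at hcase hdef
    -- need : gm = f - 1
    have h4 : gm = f - 1 := by
      rcases hcase with ⟨h1, h2⟩ | h1 <;> omega
    rw [h4] at hm1 hm2
    -- f * p' ≤ (a+1) * p
    have hq1' : f * p' ≤ (a + 1) * p :=
      le_trans (mul_le_mul_of_nonneg_right hstep2 hp'.le) hq1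
    ring_nf at hq1' hm1 hm2 hf1 hf2
    have hA : Int.fdiv ((a' + 1) * p) (p' + p) = f :=
      fdiv_eq_of_bounds _ _ _ hD (by rw [hdef]; ring_nf; linarith)
        (by rw [hdef]; ring_nf; linarith)
    have hB : Int.fdiv ((a' - 1) * p) (p' + p) = f - 1 :=
      fdiv_eq_of_bounds _ _ _ hD (by rw [hdef]; ring_nf; linarith)
        (by rw [hdef]; ring_nf; linarith)
    omega
  · simp only [pow_one, Nat.cast_one] at hcase hdef
    have hsub : a + (-1 : ℤ) = a - 1 := by ring
    rw [hsub] at hcase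
    have h3 : gp = f + 1 := by
      rcases hcase with ⟨h1, h2⟩ | h1 <;> omega
    rw [h3] at hq1 hq2
    ring_nf at hq1 hq2 hf1 hf2
    have hA : Int.fdiv ((a' + 1) * p) (p' + p) = f + 1 :=
      fdiv_eq_of_bounds _ _ _ hD (by rw [hdef]; ring_nf; linarith)
        (by rw [hdef]; ring_nf; linarith)
    have hB : Int.fdiv ((a' - 1) * p) (p' + p) = f :=
      fdiv_eq_of_bounds _ _ _ hD (by rw [hdef]; ring_nf; linarith)
        (by rw [hdef]; ring_nf; linarith)
    omega
end

section
/- Let 1 ≤ p < p' < 2p with gcd(p,p') = 1, let 1 ≤ a < p' and e ∈ {0,1}, and set a' = 2a - e - ⌊a(p'-p)/p'⌋. Then ⌊(a' + (-1)^{1-e})p/(p'+p)⌋ = ⌊a'p/(p'+p)⌋ and ⌊a'p/(p'+p)⌋ = a - 1 - ⌊a(p'-p)/p'⌋. -/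
private lemma fdiv_eq_of (x y c : ℤ) (hy : 0 < y) (h1 : c * y ≤ x) (h2 : x < (c + 1) * y) :
    x.fdiv y = c := by
  rw [Int.fdiv_eq_ediv_of_nonneg _ hy.le]
  have h3 : c ≤ x / y := (Int.le_ediv_iff_mul_le hy).2 h1
  have h4 : x / y < c + 1 := (Int.ediv_lt_iff_lt_mul hy).2 h2
  omega

/-- Let `1 ≤ p < p' < 2p` with `gcd(p,p') = 1`, `1 ≤ a < p'`, `e ∈ {0,1}`, and
`a' = 2a - e - ⌊a(p'-p)/p'⌋`. Then `⌊(a' + (-1)^{1-e})p/(p'+p)⌋ = ⌊a'p/(p'+p)⌋`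
and `⌊a'p/(p'+p)⌋ = a - 1 - ⌊a(p'-p)/p'⌋`. -/
theorem bd_transform_startpoint (p p' a a' : ℤ) (e : ℕ) (hp : 1 ≤ p) (hpp : p < p')
    (h2p : p' < 2 * p) (hcop : Int.gcd p p' = 1) (ha : 1 ≤ a) (ha2 : a < p') (he : e ≤ 1)
    (hdef : a' = 2 * a - (e : ℤ) - Int.fdiv (a * (p' - p)) p') :
    Int.fdiv ((a' + (-1 : ℤ) ^ (1 - e)) * p) (p' + p) = Int.fdiv (a' * p) (p' + p) ∧
    Int.fdiv (a' * p) (p' + p) = a - 1 - Int.fdiv (a * (p' - p)) p' := by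
  set q := Int.fdiv (a * (p' - p)) p' with hq
  have hp' : (0:ℤ) < p' := by omega
  have hqe : q = (a * (p' - p)) / p' := Int.fdiv_eq_ediv_of_nonneg _ hp'.le
  set r := a * (p' - p) - q * p' with hr
  have hrmod : r = a * (p' - p) % p' := by rw [hr, hqe, Int.emod_def]; ring
  have hr0 : 0 ≤ r := by rw [hrmod]; exact Int.emod_nonneg _ hp'.ne'
  have hr1 : r < p' := by rw [hrmod]; exact Int.emod_lt_of_pos _ hp'
  have hrne : r ≠ 0 := by
    intro h0
    have hdvd : p' ∣ a * (p' - p) := Int.dvd_of_emod_eq_zero (by rw [← hrmod]; exact h0)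
    have hco : IsCoprime (p' : ℤ) (p' - p) := by
      have h := (Int.isCoprime_iff_gcd_eq_one.mpr hcop).symm.neg_right.add_mul_left_right 1
      rwa [mul_one, neg_add_eq_sub] at h
    have := Int.le_of_dvd (by omega) (hco.dvd_of_dvd_mul_right hdvd)
    omega
  have hrpos : 1 ≤ r := by omega
  have key : a' * p = (a - 1 - q) * (p' + p) + (p' + p - (e:ℤ) * p - r) := by
    rw [hdef, hr]; ring
  have hy : (0:ℤ) < p' + p := by omega
  have hx : (a - 1 - q + 1) * (p' + p) = (a - 1 - q) * (p' + p) + (p' + p) := by ring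
  interval_cases e <;> norm_num at key ⊢
  · -- e = 0, epsilon = -1
    have h2 : Int.fdiv (a' * p) (p' + p) = a - 1 - q :=
      fdiv_eq_of _ _ _ hy (by linarith) (by linarith)
    have h1 : Int.fdiv ((a' + -1) * p) (p' + p) = a - 1 - q := by
      have hm : (a' + -1) * p = a' * p - p := by ring
      apply fdiv_eq_of _ _ _ hy <;> rw [hm] <;> linarith
    exact ⟨h1.trans h2.symm, h2⟩
  · -- e = 1, epsilon = 1
    have h2 : Int.fdiv (a' * p) (p' + p) = a - 1 - q :=
      fdiv_eq_of _ _ _ hy (by linarith) (by linarith)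
    have h1 : Int.fdiv ((a' + 1) * p) (p' + p) = a - 1 - q := by
      have hm : (a' + 1) * p = a' * p + p := by ring
      apply fdiv_eq_of _ _ _ hy <;> rw [hm] <;> linarith
    exact ⟨h1.trans h2.symm, h2⟩
end

section
/- Let 1 ≤ p < p' with gcd(p,p')=1 and let 0 ≤ a ≤ p' be interfacial in the (p,p')-model with ρ^{p,p'}(a) = r. Then a+r is interfacial in the (p,p'+p)-model and ρ^{p,p'+p}(a+r) = r. -/
private lemma fdiv_bounds_s7 (x b : ℤ) (hb : 0 < b) :
    b * (Int.fdiv x b) ≤ x ∧ x < b * (Int.fdiv x b) + b := by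
  rw [Int.fdiv_eq_ediv_of_nonneg _ hb.le]
  have h1 := Int.mul_ediv_add_emod x b
  have h2 := Int.emod_nonneg x hb.ne'
  have h3 := Int.emod_lt_of_pos x hb
  omega

private lemma fdiv_eq_of_s7 (x b q : ℤ) (hb : 0 < b) (h1 : b * q ≤ x) (h2 : x < b * (q + 1)) :
    Int.fdiv x b = q := by
  rw [Int.fdiv_eq_ediv_of_nonneg _ hb.le]
  have hle : q ≤ x / b := (Int.le_ediv_iff_mul_le hb).2 (by linarith [h1])
  have hlt : x / b < q + 1 := (Int.ediv_lt_iff_lt_mul hb).2 (by linarith [h2])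
  omega

/-- Let `1 ≤ p < p'` with `gcd(p,p') = 1` and let `0 ≤ a ≤ p'` be interfacial in the
`(p,p')`-model with `ρ^{p,p'}(a) = r` (where interfacial means
`⌊(a+1)p/p'⌋ = ⌊(a-1)p/p'⌋ + 1` and `ρ^{p,p'}(a) = ⌊(a+1)p/p'⌋`, with floor division;
this convention makes `0` and `p'` automatically interfacial). Then `a+r` is interfacial
in the `(p,p'+p)`-model and `ρ^{p,p'+p}(a+r) = r`. -/
theorem interfacial_B_transform (p p' a r : ℤ) (hp : 1 ≤ p) (hpp : p < p')
    (hcop : Int.gcd p p' = 1) (ha0 : 0 ≤ a) (ha1 : a ≤ p')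
    (hint : Int.fdiv ((a + 1) * p) p' = Int.fdiv ((a - 1) * p) p' + 1)
    (hr : r = Int.fdiv ((a + 1) * p) p') :
    Int.fdiv ((a + r + 1) * p) (p' + p) = Int.fdiv ((a + r - 1) * p) (p' + p) + 1 ∧
    Int.fdiv ((a + r + 1) * p) (p' + p) = r := by
  have hp' : (0:ℤ) < p' := by linarith
  have hq : (0:ℤ) < p' + p := by linarith
  obtain ⟨h1, h2⟩ := fdiv_bounds_s7 ((a + 1) * p) p' hp'
  obtain ⟨h3, h4⟩ := fdiv_bounds_s7 ((a - 1) * p) p' hp'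
  rw [← hr] at h1 h2
  rw [show Int.fdiv ((a - 1) * p) p' = r - 1 by omega] at h3 h4
  -- h1 : p' * r ≤ (a+1)*p, h2 : (a+1)*p < p'*r + p'
  -- h3 : p' * (r-1) ≤ (a-1)*p, h4 : (a-1)*p < p'*(r-1) + p'
  have e1 : Int.fdiv ((a + r + 1) * p) (p' + p) = r := by
    apply fdiv_eq_of_s7 _ _ _ hq
    · nlinarith
    · nlinarith
  have e2 : Int.fdiv ((a + r - 1) * p) (p' + p) = r - 1 := by
    apply fdiv_eq_of_s7 _ _ _ hq
    · nlinarith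
    · nlinarith
  refine ⟨by omega, e1⟩
end

section
/- Let 1 ≤ p < p' with gcd(p,p')=1, and let 0 < a' < p'+p-1 be such that both a' and a'+1 are interfacial in the (p,p'+p)-model with ρ^{p,p'+p}(a'+1) = ρ^{p,p'+p}(a') + 1. Then a = a' - ρ^{p,p'+p}(a') is multifacial in the (p,p')-model, i.e. ⌊(a+1)p/p'⌋ = ⌊(a-1)p/p'⌋ + 2. -/
set_option maxHeartbeats 1000000

lemma ediv_eq_of_bounds {a b c : ℤ} (hb : 0 < b) (h1 : c * b ≤ a) (h2 : a < (c + 1) * b) :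
    a / b = c := by
  have hle : c ≤ a / b := (Int.le_ediv_iff_mul_le hb).mpr h1
  have hlt : a / b < c + 1 := (Int.ediv_lt_iff_lt_mul hb).mpr h2
  omega

/-- Let `1 ≤ p < p'` with `gcd(p,p') = 1` and let `0 < a' < p'+p-1` be such that both `a'`
and `a'+1` are interfacial in the `(p,p'+p)`-model with
`ρ^{p,p'+p}(a'+1) = ρ^{p,p'+p}(a') + 1`. Then `a = a' - ρ^{p,p'+p}(a')` is multifacial
in the `(p,p')`-model: `⌊(a+1)p/p'⌋ = ⌊(a-1)p/p'⌋ + 2`. -/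
theorem adjacent_interfacial_multifacial (p p' a' : ℤ) (hp : 1 ≤ p) (hpp : p < p')
    (hcop : Int.gcd p p' = 1) (h1 : 0 < a') (h2 : a' < p' + p - 1)
    (hi1 : Int.fdiv ((a' + 1) * p) (p' + p) = Int.fdiv ((a' - 1) * p) (p' + p) + 1)
    (hi2 : Int.fdiv ((a' + 2) * p) (p' + p) = Int.fdiv (a' * p) (p' + p) + 1)
    (hrr : Int.fdiv ((a' + 2) * p) (p' + p) = Int.fdiv ((a' + 1) * p) (p' + p) + 1) :
    Int.fdiv ((a' - Int.fdiv ((a' + 1) * p) (p' + p) + 1) * p) p'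
      = Int.fdiv ((a' - Int.fdiv ((a' + 1) * p) (p' + p) - 1) * p) p' + 2 := by
  have hq : (0:ℤ) < p' + p := by linarith
  have hp' : (0:ℤ) < p' := by linarith
  simp only [Int.fdiv_eq_ediv_of_nonneg _ hq.le, Int.fdiv_eq_ediv_of_nonneg _ hp'.le] at *
  set q := p' + p with hqdef
  set r := ((a' + 1) * p) / q with hrdef
  -- basic div/mod facts
  have e1 := Int.mul_ediv_add_emod ((a' + 1) * p) q
  have m1a := Int.emod_nonneg ((a' + 1) * p) hq.ne'
  have m1b := Int.emod_lt_of_pos ((a' + 1) * p) hq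
  have e2 := Int.mul_ediv_add_emod ((a' - 1) * p) q
  have m2a := Int.emod_nonneg ((a' - 1) * p) hq.ne'
  have m2b := Int.emod_lt_of_pos ((a' - 1) * p) hq
  have e3 := Int.mul_ediv_add_emod (a' * p) q
  have m3a := Int.emod_nonneg (a' * p) hq.ne'
  have m3b := Int.emod_lt_of_pos (a' * p) hq
  have e4 := Int.mul_ediv_add_emod ((a' + 2) * p) q
  have m4a := Int.emod_nonneg ((a' + 2) * p) hq.ne'
  have m4b := Int.emod_lt_of_pos ((a' + 2) * p) hq
  rw [← hrdef] at e1
  rw [hrr] at e4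
  rw [show ((a' - 1) * p) / q = r - 1 by omega] at e2
  have hr0 : a' * p / q = r := by omega
  rw [hr0] at e3
  -- key linear bounds
  have b1 : (a' + 1) * p < (r + 1) * q := by linarith
  have b3 : (a' - 1) * p < r * q := by linarith
  have b4 : r * q ≤ a' * p := by linarith
  have b5 : (r + 1) * q ≤ (a' + 2) * p := by linarith
  rw [hqdef] at b1 b3 b4 b5
  have g1 : ((a' - r + 1) * p) / p' = r + 1 := by
    apply ediv_eq_of_bounds hp' <;> linarith
  have g2 : ((a' - r - 1) * p) / p' = r - 1 := by
    apply ediv_eq_of_bounds hp' <;> linarith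
  rw [g1, g2]; ring
end

section
/- Let c_0,...,c_n be positive integers with c_n ≥ 2, set t_k = -1 + Σ_{i=0}^{k-1} c_i for 0 ≤ k ≤ n+1 and t = t_{n+1} - 1. Define the matrix entries C_{j,i} for 0 ≤ i,j ≤ t by: if j = t_k for some 1 ≤ k ≤ n then C_{j,j-1} = -1, C_{j,j} = 1, C_{j,j+1} = 1; otherwise C_{j,j-1} = -1, C_{j,j} = 2, C_{j,j+1} = -1; and C_{j,i} = 0 for |i-j| > 1. Define string lengths l_j = y_{k-1} + (j - t_k - 1) y_k for t_k < j ≤ t_{k+1}, where y_{-1}=0, y_0=1, y_k = c_{k-1}y_{k-1} + y_{k-2}. Then for every j with 0 ≤ j < t, Σ_{i=1}^{t} l_i C_{i,j} = -δ_{j,0}. -/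
/-- Let `c_0,...,c_n` be positive integers with `c_n ≥ 2`, `t_k = -1 + Σ_{i<k} c_i`,
and `t = t_{n+1} - 1`. Let `C` be the matrix with rows given by `(-1, 1, 1)` at
positions `(j, j-1), (j,j), (j,j+1)` when `j = t_k` for some `1 ≤ k ≤ n`, by
`(-1, 2, -1)` otherwise, and `C_{j,i} = 0` for `|i - j| > 1`. Let the string lengths be
`l_j = y_{k-1} + (j - t_k - 1) y_k` for `t_k < j ≤ t_{k+1}`, where `y` is the
(index-shifted) continuant sequence: here `y k` stands for the paper's `y_{k-1}`, so
`y 0 = 0`, `y 1 = 1`, `y (i+2) = c i * y (i+1) + y i`. Then for every `0 ≤ j < t`,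
`Σ_{i=1}^{t} l_i C_{i,j} = -δ_{j,0}`. -/
theorem string_length_sum (n : ℕ) (c : ℕ → ℤ) (y t : ℕ → ℤ)
    (C : ℤ → ℤ → ℤ) (l : ℤ → ℤ)
    (hc : ∀ i ≤ n, 1 ≤ c i) (hcn : 2 ≤ c n)
    (ht : ∀ m, t m = -1 + ∑ i ∈ Finset.range m, c i)
    (hy0 : y 0 = 0) (hy1 : y 1 = 1)
    (hy : ∀ i ≤ n, y (i + 2) = c i * y (i + 1) + y i)
    (hC1 : ∀ k, 1 ≤ k → k ≤ n →
      C (t k) (t k - 1) = -1 ∧ C (t k) (t k) = 1 ∧ C (t k) (t k + 1) = 1)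
    (hC2 : ∀ j : ℤ, 0 ≤ j → j ≤ t (n + 1) - 1 → (∀ k, 1 ≤ k → k ≤ n → j ≠ t k) →
      C j (j - 1) = -1 ∧ C j j = 2 ∧ C j (j + 1) = -1)
    (hC0 : ∀ j i : ℤ, 0 ≤ j → j ≤ t (n + 1) - 1 → 0 ≤ i → i ≤ t (n + 1) - 1 →
      1 < |i - j| → C j i = 0)
    (hl : ∀ k ≤ n, ∀ j : ℤ, t k < j → j ≤ t (k + 1) →
      l j = y k + (j - t k - 1) * y (k + 1)) :
    ∀ j : ℤ, 0 ≤ j → j < t (n + 1) - 1 →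
      (∑ i ∈ Finset.Icc (1 : ℤ) (t (n + 1) - 1), l i * C i j) =
        if j = 0 then -1 else 0 := by
  
  have ht0 : t 0 = -1 := by rw [ht]; simp
  have htstep : ∀ m, m ≤ n → t (m + 1) = t m + c m := by
    intro m _; rw [ht, ht, Finset.sum_range_succ]; ring
  have hmono : ∀ b : ℕ, b ≤ n + 1 → ∀ a : ℕ, a ≤ b → t a + ((b : ℤ) - a) ≤ t b := by
    intro b
    induction b with
    | zero => intro _ a ha; have : a = 0 := by omega
              subst this; simp
    | succ m ih =>
      intro hm a ha
      rcases Nat.lt_or_ge a (m + 1) with h | h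
      · have h1 := ih (by omega) a (by omega)
        have h2 := hc m (by omega)
        rw [htstep m (by omega)]
        push_cast at h1 ⊢
        omega
      · have : a = m + 1 := by omega
        subst this; simp
  have hseg : ∀ i : ℤ, 0 ≤ i → i ≤ t (n + 1) → ∃ k, k ≤ n ∧ t k < i ∧ i ≤ t (k + 1) := by
    intro i hi0 hin
    have haux : ∀ m : ℕ, m ≤ n + 1 → i ≤ t m → ∃ k, k + 1 ≤ m ∧ t k < i ∧ i ≤ t (k + 1) := by
      intro m
      induction m with
      | zero => intro _ h; rw [ht0] at h; omega
      | succ m ih =>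
        intro hm h
        by_cases h' : i ≤ t m
        · obtain ⟨k, hk, h1, h2⟩ := ih (by omega) h'
          exact ⟨k, by omega, h1, h2⟩
        · exact ⟨m, le_refl _, by omega, h⟩
    obtain ⟨k, hk, h1, h2⟩ := haux (n + 1) le_rfl hin
    exact ⟨k, by omega, h1, h2⟩
  have hne : ∀ (k : ℕ) (i : ℤ), k ≤ n → t k < i → i < t (k + 1) →
      ∀ m, 1 ≤ m → m ≤ n → i ≠ t m := by
    intro k i hk h1 h2 m _ hm
    rcases le_or_gt m k with h | h
    · have := hmono k (by omega) m h
      push_cast at this; omega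
    · have := hmono m (by omega) (k + 1) h
      push_cast at this; omega
  intro j hj0 hjT
  have hT1 : (1 : ℤ) ≤ t (n + 1) - 1 := by omega
  by_cases hj : j = 0
  · subst hj
    rw [if_pos rfl]
    have hsub : ({1} : Finset ℤ) ⊆ Finset.Icc 1 (t (n + 1) - 1) := by
      simp only [Finset.singleton_subset_iff, Finset.mem_Icc]; omega
    have hsum : (∑ i ∈ Finset.Icc (1 : ℤ) (t (n + 1) - 1), l i * C i 0)
        = ∑ i ∈ ({1} : Finset ℤ), l i * C i 0 := by
      refine (Finset.sum_subset hsub ?_).symm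
      intro x hx hx1
      simp only [Finset.mem_Icc] at hx
      simp only [Finset.mem_singleton] at hx1
      have hCx : C x 0 = 0 := hC0 x 0 (by omega) (by omega) (by omega) (by omega)
        (lt_abs.mpr (Or.inr (by omega)))
      rw [hCx, mul_zero]
    have hl1 : l 1 = 1 := by
      obtain ⟨k, hk, h1, h2⟩ := hseg 1 (by omega) (by omega)
      have hlval := hl k hk 1 h1 h2
      have hkb := hmono k (by omega) 0 (Nat.zero_le k)
      rw [ht0] at hkb
      have hk1 : k ≤ 1 := by push_cast at hkb; omega
      interval_cases k
      · rw [hlval, ht0, hy0, hy1]; ring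
      · have ht1 : t 1 = 0 := by push_cast at hkb; omega
        rw [hlval, ht1, hy1]; ring
    have hC10 : C 1 0 = -1 := by
      by_cases hex : ∃ m, 1 ≤ m ∧ m ≤ n ∧ (1 : ℤ) = t m
      · obtain ⟨m, hm1, hm2, hme⟩ := hex
        have h := (hC1 m hm1 hm2).1
        rw [← hme] at h
        norm_num at h
        exact h
      · push_neg at hex
        have h := (hC2 1 (by omega) (by omega) hex).1
        norm_num at h
        exact h
    rw [hsum, Finset.sum_singleton, hl1, hC10]; ring
  · rw [if_neg hj]
    have hj1 : (1 : ℤ) ≤ j := by omega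
    have hc0 := hc 0 (Nat.zero_le n)
    have ht1 : t (0 + 1) = -1 + c 0 := by rw [htstep 0 (Nat.zero_le n), ht0]
    have hl0 : l 0 = 0 := by
      have h := hl 0 (Nat.zero_le n) 0 (by omega) (by omega)
      rw [h, ht0, hy0, hy1]; ring
    have hIcc : Finset.Icc (0 : ℤ) (t (n + 1) - 1)
        = insert 0 (Finset.Icc 1 (t (n + 1) - 1)) := by
      ext x; simp only [Finset.mem_Icc, Finset.mem_insert]; omega
    have hstep1 : (∑ i ∈ Finset.Icc (1 : ℤ) (t (n + 1) - 1), l i * C i j)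
        = ∑ i ∈ Finset.Icc (0 : ℤ) (t (n + 1) - 1), l i * C i j := by
      rw [hIcc, Finset.sum_insert (by simp), hl0, zero_mul, zero_add]
    have hsub : Finset.Icc (j - 1) (j + 1) ⊆ Finset.Icc (0 : ℤ) (t (n + 1) - 1) := by
      intro x hx
      simp only [Finset.mem_Icc] at hx ⊢
      omega
    have hstep2 : (∑ i ∈ Finset.Icc (0 : ℤ) (t (n + 1) - 1), l i * C i j)
        = ∑ i ∈ Finset.Icc (j - 1) (j + 1), l i * C i j := by
      refine (Finset.sum_subset hsub ?_).symm
      intro x hx hx'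
      simp only [Finset.mem_Icc] at hx
      rw [Finset.mem_Icc] at hx'
      push_neg at hx'
      have hcase : x < j - 1 ∨ j + 1 < x := by
        by_cases h : j - 1 ≤ x
        · exact Or.inr (hx' h)
        · exact Or.inl (by omega)
      have hCx : C x j = 0 := by
        refine hC0 x j (by omega) (by omega) (by omega) (by omega) ?_
        rcases hcase with h | h
        · exact lt_abs.mpr (Or.inl (by omega))
        · exact lt_abs.mpr (Or.inr (by omega))
      rw [hCx, mul_zero]
    have h3 : Finset.Icc (j - 1) (j + 1) = {j - 1, j, j + 1} := by
      ext x
      simp only [Finset.mem_Icc, Finset.mem_insert, Finset.mem_singleton]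
      omega
    have hstep3 : (∑ i ∈ Finset.Icc (j - 1) (j + 1), l i * C i j)
        = l (j - 1) * C (j - 1) j + l j * C j j + l (j + 1) * C (j + 1) j := by
      rw [h3, Finset.sum_insert (by simp only [Finset.mem_insert, Finset.mem_singleton]; omega),
        Finset.sum_insert (by simp only [Finset.mem_singleton]; omega),
        Finset.sum_singleton]
      ring
    obtain ⟨k, hk, hk1, hk2⟩ := hseg j hj0 (by omega)
    have hck := hc k hk
    have hstepk := htstep k hk
    have hCr : C (j + 1) j = -1 := by
      by_cases hex : ∃ m, 1 ≤ m ∧ m ≤ n ∧ j + 1 = t m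
      · obtain ⟨m, hm1, hm2, hme⟩ := hex
        have h := (hC1 m hm1 hm2).1
        rw [← hme] at h
        have e : j + 1 - 1 = j := by ring
        rw [e] at h; exact h
      · push_neg at hex
        have h := (hC2 (j + 1) (by omega) (by omega) hex).1
        have e : j + 1 - 1 = j := by ring
        rw [e] at h; exact h
    rw [hstep1, hstep2, hstep3, hCr]
    by_cases hjb : j = t (k + 1)
    · -- j is a boundary t (k+1)
      have hkn : k + 1 ≤ n := by
        by_contra hcon
        have hkk : k + 1 = n + 1 := by omega
        rw [hkk] at hjb
        omega
      have hCd : C j j = 1 := by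
        have h := (hC1 (k + 1) (by omega) hkn).2.1
        rw [← hjb] at h; exact h
      have hlj : l j = y k + (c k - 1) * y (k + 1) := by
        rw [hl k hk j hk1 hk2, hjb, hstepk]; ring
      have hstepk1 := htstep (k + 1) hkn
      have hck1 := hc (k + 1) hkn
      have hlj1 : l (j + 1) = y (k + 1) := by
        rw [hl (k + 1) hkn (j + 1) (by omega) (by omega), hjb]; ring
      by_cases hjm : j - 1 = t k
      · -- j - 1 is also a boundary: c k = 1
        have hck_eq : c k = 1 := by omega
        obtain ⟨k', rfl⟩ : ∃ k', k = k' + 1 := by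
          rcases k with _ | k'
          · exfalso; rw [ht0] at hjm; omega
          · exact ⟨k', rfl⟩
        have hCl : C (j - 1) j = 1 := by
          have h := (hC1 (k' + 1) (by omega) (by omega)).2.2
          rw [← hjm] at h
          have e : j - 1 + 1 = j := by ring
          rw [e] at h; exact h
        have hstepk' := htstep k' (by omega)
        have hck' := hc k' (by omega)
        have hlj0 : l (j - 1) = y k' + (c k' - 1) * y (k' + 1) := by
          rw [hjm, hl k' (by omega) (t (k' + 1)) (by omega) le_rfl, hstepk']; ring
        have hyk : y (k' + 1 + 1) = c k' * y (k' + 1) + y k' := hy k' (by omega)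
        rw [hCd, hCl, hlj, hlj1, hlj0, hck_eq, hyk]; ring
      · -- interior j - 1
        have hCl : C (j - 1) j = -1 := by
          have hne1 : ∀ m, 1 ≤ m → m ≤ n → j - 1 ≠ t m :=
            hne k (j - 1) hk (by omega) (by omega)
          have h := (hC2 (j - 1) (by omega) (by omega) hne1).2.2
          have e : j - 1 + 1 = j := by ring
          rw [e] at h; exact h
        have hlj0 : l (j - 1) = y k + (j - 1 - t k - 1) * y (k + 1) :=
          hl k hk (j - 1) (by omega) (by omega)
        rw [hCd, hCl, hlj, hlj1, hlj0]
        have e : j - 1 - t k - 1 = c k - 2 := by omega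
        rw [e]; ring
    · -- j strictly inside segment k
      have hjlt : j < t (k + 1) := by omega
      have hjne : ∀ m, 1 ≤ m → m ≤ n → j ≠ t m := hne k j hk hk1 hjlt
      have hCd : C j j = 2 := (hC2 j hj0 (by omega) hjne).2.1
      have hlj : l j = y k + (j - t k - 1) * y (k + 1) := hl k hk j hk1 hk2
      have hlj1 : l (j + 1) = y k + (j - t k) * y (k + 1) := by
        rw [hl k hk (j + 1) (by omega) (by omega)]; ring
      by_cases hjm : j - 1 = t k
      · obtain ⟨k', rfl⟩ : ∃ k', k = k' + 1 := by
          rcases k with _ | k'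
          · exfalso; rw [ht0] at hjm; omega
          · exact ⟨k', rfl⟩
        have hCl : C (j - 1) j = 1 := by
          have h := (hC1 (k' + 1) (by omega) (by omega)).2.2
          rw [← hjm] at h
          have e : j - 1 + 1 = j := by ring
          rw [e] at h; exact h
        have hstepk' := htstep k' (by omega)
        have hck' := hc k' (by omega)
        have hlj0 : l (j - 1) = y k' + (c k' - 1) * y (k' + 1) := by
          rw [hjm, hl k' (by omega) (t (k' + 1)) (by omega) le_rfl, hstepk']; ring
        have hyk : y (k' + 1 + 1) = c k' * y (k' + 1) + y k' := hy k' (by omega)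
        rw [hCd, hCl, hlj, hlj1, hlj0]
        have e2 : j - t (k' + 1) - 1 = 0 := by omega
        have e3 : j - t (k' + 1) = 1 := by omega
        rw [e2, e3, hyk]; ring
      · have hCl : C (j - 1) j = -1 := by
          have hne1 : ∀ m, 1 ≤ m → m ≤ n → j - 1 ≠ t m :=
            hne k (j - 1) hk (by omega) (by omega)
          have h := (hC2 (j - 1) (by omega) (by omega) hne1).2.2
          have e : j - 1 + 1 = j := by ring
          rw [e] at h; exact h
        have hlj0 : l (j - 1) = y k + (j - 1 - t k - 1) * y (k + 1) :=
          hl k hk (j - 1) (by omega) (by omega)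
        rw [hCd, hCl, hlj, hlj1, hlj0]
        ring
end
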